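/- arXiv:math/0701479 — 6 statements merged into one kernel-verified Lean document; each statement's English description precedes it below -/
import Mathlib

section
/- Let q = p^n be a prime power and let π be an algebraic integer such that |ψ(π)| = √q for every embedding ψ: ℚ(π) → ℂ. If ψ(π) ∉ ℝ for some embedding ψ, then ℚ(π) is a CM field, i.e. a totally imaginary quadratic extension of a totally real number field. -/
open IntermediateField Polynomial

set_option maxHeartbeats 1000000
set_option synthInstance.maxHeartbeats 400000

/-- A `q`-Weil number (`q = p^n`) whose image under some complex embedding is
non-real generates a CM field: a totally imaginary quadratic extension of a
totally real field. -/
theorem weil_number_nonreal_is_CM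
    (p n : ℕ) (hp : p.Prime) (hn : 0 < n)
    (K : Type) [Field K] [NumberField K] (π : K)
    (hgen : IntermediateField.adjoin ℚ {π} = ⊤)
    (hint : IsIntegral ℤ π)
    (habs : ∀ ψ : K →+* ℂ, ‖ψ π‖ = Real.sqrt (p ^ n))
    (hnonreal : ∃ ψ : K →+* ℂ, (ψ π).im ≠ 0) :
    ∃ F : IntermediateField ℚ K,
      (∀ φ : F →+* ℂ, ∀ x : F, (φ x).im = 0) ∧
      Module.finrank F K = 2 ∧
      (∀ ψ : K →+* ℂ, ∃ x : K, (ψ x).im ≠ 0) := by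
  obtain ⟨ψ₀, hψ₀⟩ := hnonreal
  set q : ℕ := p ^ n with hqdef
  have hq0 : 0 < q := pow_pos hp.pos n
  have hqR : (0:ℝ) < (q:ℝ) := by exact_mod_cast hq0
  -- norm-square of every embedding of π is q
  have hnsq : ∀ ψ : K →+* ℂ, Complex.normSq (ψ π) = (q:ℝ) := by
    intro ψ
    have h := habs ψ
    have h2 := Complex.sq_norm (ψ π)
    rw [h] at h2
    rw [← h2, Real.sq_sqrt (by positivity)]
    norm_cast
  have hψne : ∀ ψ : K →+* ℂ, ψ π ≠ 0 := by
    intro ψ h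
    have := hnsq ψ
    rw [h] at this
    simp at this
    exact hqR.ne' (by exact_mod_cast this.symm)
  have hπne : π ≠ 0 := by
    intro h; exact hψne ψ₀ (by rw [h, map_zero])
  -- every embedding of π is non-real
  have hB : ∀ ψ : K →+* ℂ, (ψ π).im ≠ 0 := by
    intro ψ him
    -- then (ψ π)^2 = q, hence π^2 = q in K, hence ψ₀ π real, contradiction
    have hre : (ψ π) = ((ψ π).re : ℂ) := (Complex.ext_iff).2 ⟨rfl, by simp [him]⟩
    have hsq : (ψ π)^2 = (q:ℂ) := by
      have : Complex.normSq (ψ π) = (ψ π).re ^ 2 := by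
        rw [Complex.normSq_apply]; rw [him]; ring
      rw [hre, ← Complex.ofReal_pow, ← this, hnsq ψ]
      simp
    have hπsq : π ^ 2 = (q : K) := by
      apply ψ.injective
      rw [map_pow, hsq, map_natCast]
    have hsq₀ : (ψ₀ π)^2 = (q:ℂ) := by
      rw [← map_pow, hπsq, map_natCast]
    -- z^2 = q > 0 real forces z real
    have him2 : ((ψ₀ π)^2).im = 2 * (ψ₀ π).re * (ψ₀ π).im := by
      simp only [pow_two, Complex.mul_im]; ring
    have h2 : 2 * (ψ₀ π).re * (ψ₀ π).im = 0 := by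
      rw [← him2, hsq₀]; simp
    have hre0 : (ψ₀ π).re = 0 := by
      rcases mul_eq_zero.1 h2 with h | h
      · rcases mul_eq_zero.1 h with h | h
        · norm_num at h
        · exact h
      · exact absurd h hψ₀
    have := congrArg Complex.re hsq₀
    simp [pow_two, Complex.mul_re, hre0] at this
    nlinarith [sq_nonneg (ψ₀ π).im, hqR, this]
  -- the trace element
  set β : K := π + (q : K) * π⁻¹ with hβdef
  -- every embedding sends β to a real number
  have hC : ∀ ψ : K →+* ℂ, (ψ β).im = 0 := by
    intro ψ
    have : ψ β = ψ π + (q:ℂ) * (ψ π)⁻¹ := by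
      simp [hβdef, map_add, map_mul, map_natCast, map_inv₀]
    rw [this]
    have hns := hnsq ψ
    have hinv : (ψ π)⁻¹.im = -(ψ π).im / (q:ℝ) := by rw [Complex.inv_im, hns]
    simp only [Complex.add_im, Complex.mul_im, hinv, Complex.natCast_re, Complex.natCast_im]
    field_simp
    ring
  set F : IntermediateField ℚ K := IntermediateField.adjoin ℚ {β} with hFdef
  have hβF : β ∈ F := IntermediateField.mem_adjoin_simple_self ℚ β
  haveI : FiniteDimensional F K := FiniteDimensional.right ℚ F K
  -- totally real
  have hD : ∀ φ : (F : IntermediateField ℚ K) →+* ℂ, ∀ x : F, (φ x).im = 0 := by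
    intro φ x
    letI : Algebra F ℂ := φ.toAlgebra
    haveI : NoZeroSMulDivisors F ℂ :=
      by
        have := (faithfulSMul_iff_algebraMap_injective F ℂ).2 (algebraMap F ℂ).injective
        infer_instance
    haveI : Algebra.IsAlgebraic F K := Algebra.IsAlgebraic.of_finite F K
    let ψ : K →ₐ[F] ℂ := IsAlgClosed.lift
    have hφψ : ∀ y : F, φ y = ψ (algebraMap F K y) := fun y => (ψ.commutes y).symm
    -- the preimage of ℝ under ψ is an intermediate field containing β
    let T : IntermediateField ℚ K :=
      Subfield.toIntermediateField (Subfield.comap ψ.toRingHom Complex.ofRealHom.fieldRange)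
        (by
          intro r
          refine ⟨(r : ℝ), ?_⟩
          simp [Complex.ofRealHom_eq_coe])
    have hmemT : ∀ y : K, y ∈ T ↔ (ψ y).im = 0 := by
      intro y
      constructor
      · rintro ⟨r, hr⟩
        have h' : (r : ℂ) = ψ y := hr
        rw [← h']
        simp
      · intro h
        exact ⟨(ψ y).re, by apply Complex.ext <;> simp [h]⟩
    have hFT : F ≤ T := by
      rw [hFdef]
      apply IntermediateField.adjoin_le_iff.2
      intro y hy
      rcases hy with rfl
      exact (hmemT β).2 (hC ψ.toRingHom)
    have := (hmemT (algebraMap F K x)).1 (hFT x.2)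
    rw [hφψ x]
    exact this
  refine ⟨F, hD, ?_, fun ψ => ⟨π, hB ψ⟩⟩
  -- degree two
  have hintF : IsIntegral F π := IsIntegral.of_finite F π
  have h1 : IntermediateField.adjoin ℚ {π} ≤
      (IntermediateField.adjoin F {π}).restrictScalars ℚ :=
    IntermediateField.adjoin_le_iff.2 (fun y hy => by
      rcases hy with rfl
      exact IntermediateField.subset_adjoin F _ rfl)
  have hadj : IntermediateField.adjoin F {π} = ⊤ := by
    apply IntermediateField.restrictScalars_injective ℚ
    rw [IntermediateField.restrictScalars_top]
    exact top_unique (hgen ▸ h1)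
  have hfr : Module.finrank F K = (minpoly F π).natDegree := by
    rw [← IntermediateField.adjoin.finrank hintF, hadj]
    simp
  -- π satisfies a monic degree-2 polynomial over F
  let b : F := ⟨β, hβF⟩
  let P : Polynomial F := X^2 + C (-b) * X + C ((q : F))
  have hlindeg : (C (-b) * X + C ((q : F))).degree < ((2:ℕ) : WithBot ℕ) :=
    lt_of_le_of_lt Polynomial.degree_linear_le (by norm_num)
  have hPmonic : P.Monic := by
    have h := Polynomial.monic_X_pow_add (p := C (-b) * X + C ((q : F))) (n := 2) hlindeg
    have hP : P = X ^ 2 + (C (-b) * X + C ((q : F))) := add_assoc _ _ _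
    rw [hP]
    exact h
  have hPdeg : P.natDegree ≤ 2 := by
    rw [Polynomial.natDegree_le_iff_degree_le]
    have hP : P = X ^ 2 + (C (-b) * X + C ((q : F))) := add_assoc _ _ _
    rw [hP]
    apply (Polynomial.degree_add_le _ _).trans
    rw [max_le_iff]
    exact ⟨Polynomial.degree_X_pow_le 2, le_of_lt hlindeg⟩
  have haev : Polynomial.aeval π P = 0 := by
    have hb : algebraMap F K b = β := rfl
    have hqK : algebraMap F K ((q:F)) = (q:K) := map_natCast (algebraMap F K) q
    simp only [P, map_add, map_mul, map_pow, Polynomial.aeval_X, Polynomial.aeval_C, map_neg, hb, hqK]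
    rw [hβdef]
    field_simp
    ring
  have hle2 : (minpoly F π).natDegree ≤ 2 := by
    have := minpoly.min F π hPmonic haev
    calc (minpoly F π).natDegree ≤ P.natDegree := Polynomial.natDegree_le_natDegree this
    _ ≤ 2 := hPdeg
  have hne1 : (minpoly F π).natDegree ≠ 1 := by
    intro h1
    obtain ⟨x, hx⟩ := (minpoly.natDegree_eq_one_iff).1 h1
    have : (ψ₀ π).im = 0 := by
      rw [← hx]
      exact hD (ψ₀.comp (algebraMap F K)) x
    exact hψ₀ this
  have hpos : 0 < (minpoly F π).natDegree := minpoly.natDegree_pos hintF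
  rw [hfr]
  omega
end

section
/- Let q = p^n be a prime power and let π be a q-Weil number with ψ(π) ∈ ℝ for some complex embedding ψ. Then either n is even and π = ± p^{n/2} (so ℚ(π) = ℚ), or n is odd and ℚ(π) = ℚ(√p) with ψ(π) = ± p^{n/2} for every embedding ψ. -/
private lemma sq_cases {F : Type*} [Field F] {a b : F} (h : a ^ 2 = b ^ 2) :
    a = b ∨ a = -b := by
  have h2 : (a - b) * (a + b) = 0 := by linear_combination h
  rcases mul_eq_zero.mp h2 with h' | h'
  · exact Or.inl (sub_eq_zero.mp h')
  · exact Or.inr (eq_neg_of_add_eq_zero_left h')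

/-- A `q`-Weil number (`q = p^n`) which is real under some complex embedding:
either `n` is even and `π = ± p^{n/2}` (so `ℚ(π) = ℚ`), or `n` is odd,
`ℚ(π) = ℚ(√p)` and every embedding sends `π` to `± p^{n/2} = ± √(p^n)`. -/
theorem weil_number_real_case
    (p n : ℕ) (hp : p.Prime) (hn : 0 < n)
    (K : Type) [Field K] [NumberField K] (π : K)
    (hgen : IntermediateField.adjoin ℚ {π} = ⊤)
    (hint : IsIntegral ℤ π)
    (habs : ∀ ψ : K →+* ℂ, ‖ψ π‖ = Real.sqrt (p ^ n))
    (hreal : ∃ ψ : K →+* ℂ, (ψ π).im = 0) :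
    (Even n ∧ (π = (p : K) ^ (n / 2) ∨ π = -((p : K) ^ (n / 2))))
    ∨ (Odd n ∧
        (∃ s : K, s ^ 2 = (p : K) ∧
          IntermediateField.adjoin ℚ {π} = IntermediateField.adjoin ℚ {s}) ∧
        (∀ ψ : K →+* ℂ, ψ π = ((Real.sqrt (p ^ n) : ℝ) : ℂ) ∨
          ψ π = -((Real.sqrt (p ^ n) : ℝ) : ℂ))) := by
  obtain ⟨ψ₀, h₀⟩ := hreal
  have hq0 : (0:ℝ) ≤ (p:ℝ) ^ n := by positivity
  have hsq : Real.sqrt ((p:ℝ) ^ n) ^ 2 = (p:ℝ) ^ n := Real.sq_sqrt hq0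
  -- the key algebraic identity: π ^ 2 = p ^ n in K
  have key : π ^ 2 = (p : K) ^ n := by
    have h1 : ψ₀ π = ((ψ₀ π).re : ℂ) := by
      apply Complex.ext <;> simp [h₀]
    have h2 : |(ψ₀ π).re| = Real.sqrt ((p:ℝ) ^ n) := by
      have := habs ψ₀
      rwa [h1, Complex.norm_real, Real.norm_eq_abs] at this
    have h3 : (ψ₀ π) ^ 2 = ((p : ℂ)) ^ n := by
      rw [h1]
      have : ((ψ₀ π).re) ^ 2 = (p:ℝ) ^ n := by
        rw [← sq_abs, h2, hsq]
      exact_mod_cast this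
    apply ψ₀.injective
    rw [map_pow, h3, map_pow, map_natCast]
  have hp0 : (p : K) ≠ 0 := Nat.cast_ne_zero.mpr hp.pos.ne'
  have keyC : ∀ ψ : K →+* ℂ, (ψ π) ^ 2 = (((Real.sqrt ((p:ℝ) ^ n) : ℝ) : ℂ)) ^ 2 := by
    intro ψ
    have : ψ (π ^ 2) = ψ ((p : K) ^ n) := by rw [key]
    rw [map_pow, map_pow, map_natCast] at this
    rw [this, ← Complex.ofReal_pow, hsq]
    push_cast
    ring
  rcases Nat.even_or_odd n with he | ho
  · left
    refine ⟨he, ?_⟩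
    obtain ⟨k, hk⟩ := he
    have hk2 : n / 2 = k := by omega
    have h4 : π ^ 2 = ((p : K) ^ k) ^ 2 := by
      rw [key, ← pow_mul]; congr 1; omega
    rw [hk2]
    exact sq_cases h4
  · right
    obtain ⟨k, hk⟩ := ho
    have hpk0 : ((p : K) ^ k) ≠ 0 := pow_ne_zero _ hp0
    set s : K := π * ((p : K) ^ k)⁻¹ with hs_def
    have hπs : π = s * (p : K) ^ k := by
      rw [hs_def, inv_mul_cancel_right₀ hpk0]
    have hs2 : s ^ 2 = (p : K) := by
      rw [hs_def, mul_pow, key, hk]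
      field_simp
      ring
    refine ⟨⟨k, by omega⟩, ⟨s, hs2, ?_⟩, ?_⟩
    · apply le_antisymm
      · rw [IntermediateField.adjoin_le_iff]
        intro x hx
        rcases hx with rfl
        rw [hπs]
        exact mul_mem (IntermediateField.mem_adjoin_simple_self ℚ s)
          (pow_mem (IntermediateField.natCast_mem _ p) k)
      · rw [IntermediateField.adjoin_le_iff]
        intro x hx
        rcases hx with rfl
        exact mul_mem (IntermediateField.mem_adjoin_simple_self ℚ π)
          (inv_mem (pow_mem (IntermediateField.natCast_mem _ p) k))
    · intro ψ
      exact sq_cases (keyC ψ)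
end

section
/- Let m > n > 0 be integers with gcd(m,n) = 1. The number of lattice points (i,j) ∈ ℤ² strictly below the line segment from (0,0) to (m+n, m) and on or above the lower boundary of the parallelogram with slopes 0 then 1 (i.e., points with 0 ≤ j, j ≤ i, i ≤ j+n, strictly below the segment of slope m/(m+n)) is (m−1)(n−1)/2 + (m+n−1) = mn − (m−1)(n−1)/2. -/
/-!
Sort the points by the diagonal `k = i - j ∈ [0, n]`. On the diagonal `k` the condition
`j (m + n) < i m` reads `j n < k m`, so it carries `⌈k m / n⌉ = (k m - 1) / n + 1` points.
The diagonals `0` and `n` give `0` and `m`. For `0 < k < n` coprimality makes `k m / n`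
non-integral, so the floors for `k` and `n - k` add up to `m - 1`, and pairing `k` with `n - k`
shows that the floors of the inner diagonals sum to `(n - 1)(m - 1) / 2`.
-/

open Finset

lemma Int.sum_Ioo_zero_reflect {M : Type*} [AddCommMonoid M] (f : ℤ → M) (n : ℤ) :
    ∑ k ∈ Ioo 0 n, f (n - k) = ∑ k ∈ Ioo 0 n, f k :=
  sum_nbij' (n - ·) (n - ·) (fun k hk => by simp only [mem_Ioo] at hk ⊢; omega)
    (fun k hk => by simp only [mem_Ioo] at hk ⊢; omega) (fun _ _ => sub_sub_cancel _ _)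
    (fun _ _ => sub_sub_cancel _ _) (fun _ _ => rfl)

lemma ncard_setOf_sub_mem_eq_sum_card (s : Finset ℤ) (t : ℤ → Finset ℤ) :
    {q : ℤ × ℤ | q.1 - q.2 ∈ s ∧ q.2 ∈ t (q.1 - q.2)}.ncard = ∑ k ∈ s, #(t k) := by
  have hshear : {q : ℤ × ℤ | q.1 - q.2 ∈ s ∧ q.2 ∈ t (q.1 - q.2)}
      = (fun p : (_ : ℤ) × ℤ => (p.2 + p.1, p.2)) '' ↑(s.sigma t) := by
    ext ⟨i, j⟩
    constructor
    · rintro ⟨hk, hj⟩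
      exact ⟨⟨i - j, j⟩, mem_sigma.2 ⟨hk, hj⟩, by simp⟩
    · rintro ⟨⟨k, j'⟩, hp, he⟩
      simp only [Prod.mk.injEq] at he
      obtain ⟨rfl, rfl⟩ := he
      simpa using hp
  have hinj : Function.Injective (fun p : (_ : ℤ) × ℤ => (p.2 + p.1, p.2)) := by
    rintro ⟨k, j⟩ ⟨k', j'⟩ h
    simp only [Prod.mk.injEq] at h
    obtain ⟨hfst, rfl⟩ := h
    obtain rfl : k = k' := by omega
    rfl
  rw [hshear, Set.ncard_image_of_injective _ hinj, Set.ncard_coe_finset, card_sigma]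

lemma Int.ediv_add_ediv_reflect {m n k : ℤ} (hcop : IsCoprime m n) (hk : 0 < k) (hkn : k < n) :
    (k * m - 1) / n + ((n - k) * m - 1) / n = m - 1 := by
  have hn : 0 < n := hk.trans hkn
  have hdiv := Int.mul_ediv_add_emod (k * m - 1) n
  have hr0 := Int.emod_nonneg (k * m - 1) hn.ne'
  have hrn := Int.emod_lt_of_pos (k * m - 1) hn
  -- `n ∤ k * m` by coprimality, so the remainder of `k * m - 1` is not `n - 1`
  have hr : (k * m - 1) % n ≠ n - 1 := by
    intro h
    have hdvd : n ∣ k := hcop.symm.dvd_of_dvd_mul_right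
      ⟨(k * m - 1) / n + 1, by linear_combination h - hdiv⟩
    have := Int.le_of_dvd hk hdvd
    omega
  have hrefl : ((n - k) * m - 1) / n = m - 1 - (k * m - 1) / n := by
    rw [Int.ediv_eq_iff_of_pos hn]
    constructor <;> linarith [lt_of_le_of_ne (Int.le_sub_one_of_lt hrn) hr]
  omega

lemma Int.two_mul_sum_Ioo_ediv {m n : ℤ} (hcop : IsCoprime m n) (hn : 0 < n) :
    2 * ∑ k ∈ Ioo 0 n, (k * m - 1) / n = (n - 1) * (m - 1) := by
  calc 2 * ∑ k ∈ Ioo 0 n, (k * m - 1) / n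
      = ∑ k ∈ Ioo 0 n, ((k * m - 1) / n + ((n - k) * m - 1) / n) := by
        rw [sum_add_distrib, Int.sum_Ioo_zero_reflect (fun k => (k * m - 1) / n), two_mul]
    _ = ∑ _k ∈ Ioo 0 n, (m - 1) :=
        sum_congr rfl fun k hk => Int.ediv_add_ediv_reflect hcop (mem_Ioo.1 hk).1 (mem_Ioo.1 hk).2
    _ = (n - 1) * (m - 1) := by
        rw [sum_const, Int.card_Ioo, nsmul_eq_mul, Int.toNat_of_nonneg (by omega), sub_zero]

lemma Int.sum_Icc_ediv_add_one {m n : ℤ} (hn : 0 < n) :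
    ∑ k ∈ Icc 0 n, ((k * m - 1) / n + 1) = ∑ k ∈ Ioo 0 n, (k * m - 1) / n + (n - 1) + m := by
  have hfirst : ((0 : ℤ) * m - 1) / n = -1 :=
    (Int.ediv_eq_iff_of_pos hn).2 ⟨by linarith, by linarith⟩
  have hlast : (n * m - 1) / n = m - 1 :=
    (Int.ediv_eq_iff_of_pos hn).2 ⟨by linarith, by linarith⟩
  rw [← Ioc_insert_left hn.le, sum_insert left_notMem_Ioc, ← Ioo_insert_right hn,
    sum_insert right_notMem_Ioo, hfirst, hlast, sum_add_distrib, sum_const, Int.card_Ioo,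
    nsmul_one, Int.toNat_of_nonneg (by omega)]
  ring

lemma Int.card_Icc_zero_sub_one_ediv {a n : ℤ} (hn : 0 < n) (ha : 0 ≤ a) :
    (#(Icc 0 ((a - 1) / n)) : ℤ) = (a - 1) / n + 1 := by
  have : -1 ≤ (a - 1) / n := (Int.le_ediv_iff_mul_le hn).2 (by linarith)
  rw [Int.card_Icc, Int.toNat_of_nonneg (by omega), sub_zero]

lemma setOf_below_segment_eq_fibers {m n : ℤ} (hn : 0 < n) :
    {q : ℤ × ℤ | 0 ≤ q.2 ∧ q.2 ≤ q.1 ∧ q.1 ≤ q.2 + n ∧ q.2 * (m + n) < q.1 * m}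
      = {q | q.1 - q.2 ∈ Icc 0 n ∧ q.2 ∈ Icc 0 (((q.1 - q.2) * m - 1) / n)} := by
  ext ⟨i, j⟩
  have hbelow : j * (m + n) < i * m ↔ j * n ≤ (i - j) * m - 1 := by
    constructor <;> intro h <;> linarith
  simp only [Set.mem_ofPred_eq, mem_Icc, Int.le_ediv_iff_mul_le hn, hbelow]
  omega

/-- Count of lattice points `(i,j)` with `0 ≤ j`, `j ≤ i`, `i ≤ j + n`,
lying strictly below the segment from `(0,0)` to `(m+n, m)`
(i.e. `j(m+n) < im`), for coprime integers `m > n > 0`: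
it equals `(m−1)(n−1)/2 + (m+n−1)`. -/
theorem lattice_point_count_below_segment
    (m n : ℤ) (hn : 0 < n) (hmn : n < m) (hcop : IsCoprime m n) :
    (({q : ℤ × ℤ | 0 ≤ q.2 ∧ q.2 ≤ q.1 ∧ q.1 ≤ q.2 + n ∧
        q.2 * (m + n) < q.1 * m} : Set (ℤ × ℤ)).ncard : ℤ)
      = (m - 1) * (n - 1) / 2 + (m + n - 1) := by
  have hm : 0 < m := hn.trans hmn
  rw [setOf_below_segment_eq_fibers hn,
    ncard_setOf_sub_mem_eq_sum_card (Icc 0 n) fun k => Icc 0 ((k * m - 1) / n), Nat.cast_sum,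
    sum_congr rfl fun k hk => Int.card_Icc_zero_sub_one_ediv hn
      (mul_nonneg (mem_Icc.1 hk).1 hm.le), Int.sum_Icc_ediv_add_one hn,
    mul_comm (m - 1), ← Int.two_mul_sum_Ioo_ediv hcop hn, Int.mul_ediv_cancel_left _ two_ne_zero]
  ring
end

section
/- Fix coprime positive integers m, n. For A ⊆ ℤ a normalized (m,n)-semi-module (i.e. a semi-module contained in ℤ≥0 whose complement in ℤ≥0 has exactly r = (m−1)(n−1)/2 elements and which contains [2r, ∞)), define A^t := ℤ \ (2r − 1 − A) = { y ∈ ℤ : 2r − 1 − y ∉ A }. Then A^t is again a normalized (m,n)-semi-module, and A^{tt} = A. -/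
/-- An `(m,n)`-semi-module: a nonempty subset of `ℤ`, bounded below, closed
under adding `m` and under adding `n`. -/
def IsSemiModule (m n : ℕ) (A : Set ℤ) : Prop :=
  A.Nonempty ∧ (∃ b : ℤ, ∀ a ∈ A, b ≤ a) ∧
    (∀ a ∈ A, a + (m : ℤ) ∈ A) ∧ (∀ a ∈ A, a + (n : ℤ) ∈ A)

/-- `r = (m−1)(n−1)/2`. -/
def semiR (m n : ℕ) : ℕ := (m - 1) * (n - 1) / 2

/-- A normalized `(m,n)`-semi-module: contained in `ℤ≥0`, containing
`[2r, ∞)`, whose complement in `ℤ≥0` has exactly `r` elements. -/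
def IsNormalizedSemiModule (m n : ℕ) (A : Set ℤ) : Prop :=
  IsSemiModule m n A ∧ (∀ a ∈ A, 0 ≤ a) ∧
    (∀ x : ℤ, (2 * semiR m n : ℤ) ≤ x → x ∈ A) ∧
    ({x : ℤ | 0 ≤ x} \ A).ncard = semiR m n

/-- The dual semi-module `A^t = { y : 2r − 1 − y ∉ A }`. -/
def dualSemiModule (m n : ℕ) (A : Set ℤ) : Set ℤ :=
  {y : ℤ | ((2 * semiR m n : ℤ) - 1 - y) ∉ A}

/-- The dual of a normalized `(m,n)`-semi-module is again a normalized
`(m,n)`-semi-module, and `A^{tt} = A`. -/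
theorem dual_of_normalized_semimodule
    (m n : ℕ) (hm : 0 < m) (hn : 0 < n) (h : Nat.Coprime m n)
    (A : Set ℤ) (hA : IsNormalizedSemiModule m n A) :
    IsNormalizedSemiModule m n (dualSemiModule m n A) ∧
      dualSemiModule m n (dualSemiModule m n A) = A := by

  obtain ⟨⟨hne, hbd, hmA, hnA⟩, hpos, h2r, hcard⟩ := hA
  set R : ℤ := (2 * semiR m n : ℤ) with hR
  -- every element of the dual is nonnegative
  have hdpos : ∀ y ∈ dualSemiModule m n A, 0 ≤ y := by
    intro y hy
    by_contra hl
    exact hy (h2r _ (by omega))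
  -- the dual contains [2r, ∞)
  have hd2r : ∀ x : ℤ, R ≤ x → x ∈ dualSemiModule m n A := by
    intro x hx hmem
    have := hpos _ hmem
    omega
  -- closure under adding k, for any k such that A is closed under adding k
  have hclose : ∀ k : ℤ, (∀ a ∈ A, a + k ∈ A) →
      ∀ y ∈ dualSemiModule m n A, y + k ∈ dualSemiModule m n A := by
    intro k hk y hy hmem
    have : (R - 1 - (y + k)) + k ∈ A := hk _ hmem
    have heq : (R - 1 - (y + k)) + k = R - 1 - y := by ring
    rw [heq] at this
    exact hy this
  -- the cardinality computation
  have hIfin : (Set.Ico (0 : ℤ) R).Finite := Set.finite_Ico 0 R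
  have hIcard : (Set.Ico (0 : ℤ) R).ncard = 2 * semiR m n := by
    rw [← Finset.coe_Ico, Set.ncard_coe_finset, Int.card_Ico]
    omega
  have hCeq : Set.Ico (0 : ℤ) R \ A = {x : ℤ | 0 ≤ x} \ A := by
    ext x
    simp only [Set.mem_diff, Set.mem_Ico, Set.mem_setOf_eq]
    constructor
    · rintro ⟨⟨h0, _⟩, hnA'⟩; exact ⟨h0, hnA'⟩
    · rintro ⟨h0, hnA'⟩
      refine ⟨⟨h0, ?_⟩, hnA'⟩
      by_contra hge
      exact hnA' (h2r x (by omega))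
  have hScard : (Set.Ico (0 : ℤ) R ∩ A).ncard = semiR m n := by
    have hsum := Set.ncard_inter_add_ncard_diff_eq_ncard (Set.Ico (0 : ℤ) R) A hIfin
    rw [hCeq, hcard, hIcard] at hsum
    omega
  have hDeq : {y : ℤ | 0 ≤ y} \ dualSemiModule m n A
      = (fun x : ℤ => R - 1 - x) '' (Set.Ico (0 : ℤ) R ∩ A) := by
    ext y
    simp only [Set.mem_diff, Set.mem_setOf_eq, dualSemiModule, Set.mem_image,
      Set.mem_inter_iff, Set.mem_Ico, not_not]
    constructor
    · rintro ⟨h0, hmem⟩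
      refine ⟨R - 1 - y, ⟨⟨hpos _ hmem, by omega⟩, hmem⟩, by ring⟩
    · rintro ⟨x, ⟨⟨hx0, hxlt⟩, hxA⟩, rfl⟩
      constructor
      · omega
      · have : R - 1 - (R - 1 - x) = x := by ring
        rw [this]; exact hxA
  have hDcard : ({y : ℤ | 0 ≤ y} \ dualSemiModule m n A).ncard = semiR m n := by
    rw [hDeq, Set.ncard_image_of_injective _ (fun a b hab => by omega)]
    exact hScard
  refine ⟨⟨⟨⟨R, hd2r R le_rfl⟩, ⟨0, hdpos⟩,
      hclose (m : ℤ) hmA, hclose (n : ℤ) hnA⟩, hdpos, hd2r, hDcard⟩, ?_⟩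
  ext y
  simp only [dualSemiModule, Set.mem_setOf_eq, not_not]
  have : (2 * semiR m n : ℤ) - 1 - ((2 * semiR m n : ℤ) - 1 - y) = y := by ring
  rw [this]
end

section
/- Fix coprime positive integers m, n. Every (m,n)-semi-module B ⊆ ℤ is equivalent to a unique normalized semi-module, i.e. there is a unique t ∈ ℤ such that B + t is normalized. -/
namespace SemiModuleAux

/-- `x` is representable as a nonnegative combination of `m` and `n`. -/
def repZ (m n : ℕ) (x : ℤ) : Prop := ∃ a b : ℕ, x = a * m + b * n

lemma repZ_nonneg {m n : ℕ} {x : ℤ} (hx : repZ m n x) : 0 ≤ x := by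
  obtain ⟨a, b, rfl⟩ := hx; positivity

lemma two_semiR {m n : ℕ} (hm : 0 < m) (hn : 0 < n) (h : Nat.Coprime m n) :
    2 * semiR m n = (m - 1) * (n - 1) := by
  apply Nat.mul_div_cancel'
  have hpar : Odd m ∨ Odd n := by
    by_contra hc
    push_neg at hc
    rw [Nat.not_odd_iff_even, Nat.not_odd_iff_even] at hc
    have h2 : 2 ∣ Nat.gcd m n := Nat.dvd_gcd hc.1.two_dvd hc.2.two_dvd
    rw [h] at h2
    omega
  rcases hpar with ho | ho
  · have : Even (m - 1) := Nat.Odd.sub_odd ho odd_one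
    exact Dvd.dvd.mul_right this.two_dvd _
  · have : Even (n - 1) := Nat.Odd.sub_odd ho odd_one
    exact Dvd.dvd.mul_left this.two_dvd _

lemma exists_residue {m n : ℕ} (hn : 2 ≤ n) (h : Nat.Coprime m n) (x : ℤ) :
    ∃ a : ℕ, a < n ∧ (n : ℤ) ∣ x - a * m := by
  haveI : NeZero n := ⟨by omega⟩
  refine ⟨((x : ZMod n) * (m : ZMod n)⁻¹).val, ZMod.val_lt _, ?_⟩
  rw [← ZMod.intCast_zmod_eq_zero_iff_dvd]
  push_cast
  rw [ZMod.natCast_val, ZMod.cast_id]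
  rw [mul_assoc, ZMod.inv_mul_of_unit _ ((ZMod.isUnit_iff_coprime m n).mpr h),
    mul_one, sub_self]

/-- Chicken McNugget: every integer `≥ (m-1)(n-1)` is representable. -/
lemma repZ_of_le {m n : ℕ} (hm : 0 < m) (hn : 0 < n) (h : Nat.Coprime m n) (x : ℤ)
    (hx : ((m : ℤ) - 1) * ((n : ℤ) - 1) ≤ x) : repZ m n x := by
  rcases Nat.lt_or_ge n 2 with h2 | h2
  · -- n = 1
    have hn1 : n = 1 := by omega
    subst hn1
    have hx0 : 0 ≤ x := by simpa using hx
    exact ⟨0, x.toNat, by push_cast [Int.toNat_of_nonneg hx0]; ring⟩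
  · obtain ⟨a, ha, c, hc⟩ := exists_residue h2 h x
    have ham : (a : ℤ) ≤ (n : ℤ) - 1 := by
      have := ha; omega
    have hm1 : (1 : ℤ) ≤ (m : ℤ) := by exact_mod_cast hm
    have hbig : -(n : ℤ) < x - a * m := by nlinarith
    have hc0 : 0 ≤ c := by
      by_contra hcneg
      push_neg at hcneg
      have : c ≤ -1 := by omega
      have hn0 : (0 : ℤ) < n := by exact_mod_cast (by omega : 0 < n)
      nlinarith
    refine ⟨a, c.toNat, ?_⟩
    push_cast [Int.toNat_of_nonneg hc0]
    linarith [hc]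

lemma not_repZ_F {m n : ℕ} (hm : 2 ≤ m) (hn : 2 ≤ n) (h : Nat.Coprime m n) :
    ¬ repZ m n ((m : ℤ) * n - m - n) := by
  rintro ⟨a, b, hab⟩
  have h1 : (m : ℤ) * n = ((a : ℤ) + 1) * m + ((b : ℤ) + 1) * n := by linarith
  have hco : IsCoprime (n : ℤ) (m : ℤ) := (Nat.isCoprime_iff_coprime.mpr h.symm)
  have hco' : IsCoprime (m : ℤ) (n : ℤ) := (Nat.isCoprime_iff_coprime.mpr h)
  have hdn : (n : ℤ) ∣ ((a : ℤ) + 1) * m := ⟨(m : ℤ) - (b + 1), by linarith⟩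
  have hdm : (m : ℤ) ∣ ((b : ℤ) + 1) * n := ⟨(n : ℤ) - (a + 1), by linarith⟩
  have h2 : (n : ℤ) ∣ (a : ℤ) + 1 := hco.dvd_of_dvd_mul_right hdn
  have h4 : (m : ℤ) ∣ (b : ℤ) + 1 := hco'.dvd_of_dvd_mul_right hdm
  have h3 : (n : ℤ) ≤ (a : ℤ) + 1 := Int.le_of_dvd (by positivity) h2
  have h5 : (m : ℤ) ≤ (b : ℤ) + 1 := Int.le_of_dvd (by positivity) h4
  have hm' : (2 : ℤ) ≤ m := by exact_mod_cast hm
  have hn' : (2 : ℤ) ≤ n := by exact_mod_cast hn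
  nlinarith [mul_le_mul_of_nonneg_right h3 (by linarith : (0:ℤ) ≤ m),
    mul_le_mul_of_nonneg_right h5 (by linarith : (0:ℤ) ≤ n)]

lemma repZ_or {m n : ℕ} (hm : 2 ≤ m) (hn : 2 ≤ n) (h : Nat.Coprime m n) (x : ℤ)
    (h0 : 0 ≤ x) :
    repZ m n x ∨ repZ m n ((m : ℤ) * n - m - n - x) := by
  obtain ⟨a, ha, c, hc⟩ := exists_residue hn h x
  rcases le_or_gt (0 : ℤ) c with hc0 | hc0
  · left
    refine ⟨a, c.toNat, ?_⟩
    push_cast [Int.toNat_of_nonneg hc0]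
    linarith
  · right
    have hcle : c ≤ -1 := by omega
    have hnc : ((n - 1 - a : ℕ) : ℤ) = (n : ℤ) - 1 - a := by
      have := ha; omega
    refine ⟨n - 1 - a, (-c - 1).toNat, ?_⟩
    push_cast [Int.toNat_of_nonneg (by omega : (0:ℤ) ≤ -c - 1), hnc]
    linarith

/-- Sylvester: the number of non-representable nonnegative integers is `r`. -/
lemma sylvester {m n : ℕ} (hm : 0 < m) (hn : 0 < n) (h : Nat.Coprime m n) :
    {x : ℤ | 0 ≤ x ∧ ¬ repZ m n x}.ncard = semiR m n := by
  classical
  rcases Nat.lt_or_ge m 2 with hm2 | hm2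
  · have hm1 : m = 1 := by omega
    subst hm1
    have : {x : ℤ | 0 ≤ x ∧ ¬ repZ 1 n x} = ∅ := by
      ext x
      simp only [Set.mem_setOf_eq, Set.mem_empty_iff_false, iff_false, not_and, not_not]
      intro hx
      exact ⟨x.toNat, 0, by push_cast [Int.toNat_of_nonneg hx]; ring⟩
    rw [this, Set.ncard_empty]
    simp [semiR]
  rcases Nat.lt_or_ge n 2 with hn2 | hn2
  · have hn1 : n = 1 := by omega
    subst hn1
    have : {x : ℤ | 0 ≤ x ∧ ¬ repZ m 1 x} = ∅ := by
      ext x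
      simp only [Set.mem_setOf_eq, Set.mem_empty_iff_false, iff_false, not_and, not_not]
      intro hx
      exact ⟨0, x.toNat, by push_cast [Int.toNat_of_nonneg hx]; ring⟩
    rw [this, Set.ncard_empty]
    simp [semiR]
  -- main case
  set F : ℤ := (m : ℤ) * n - m - n with hF
  have hm' : (2 : ℤ) ≤ m := by exact_mod_cast hm2
  have hn' : (2 : ℤ) ≤ n := by exact_mod_cast hn2
  have hF0 : 0 ≤ F := by nlinarith
  have h2r : ((2 * semiR m n : ℕ) : ℤ) = F + 1 := by
    have := two_semiR hm hn h
    zify [show 1 ≤ m from hm, show 1 ≤ n from hn] at this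
    push_cast
    rw [hF]
    linear_combination this
  have hset : {x : ℤ | 0 ≤ x ∧ ¬ repZ m n x} =
      ↑((Finset.Icc (0 : ℤ) F).filter (fun x => ¬ repZ m n x)) := by
    ext x
    simp only [Set.mem_setOf_eq, Finset.coe_filter, Finset.mem_Icc, Set.mem_setOf_eq]
    constructor
    · rintro ⟨hx0, hxr⟩
      refine ⟨⟨hx0, ?_⟩, hxr⟩
      by_contra hgt
      push_neg at hgt
      exact hxr (repZ_of_le hm hn h x (by nlinarith))
    · rintro ⟨⟨hx0, _⟩, hxr⟩
      exact ⟨hx0, hxr⟩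
  rw [hset, Set.ncard_coe_finset]
  set s := (Finset.Icc (0 : ℤ) F).filter (fun x => ¬ repZ m n x) with hs
  set t := (Finset.Icc (0 : ℤ) F).filter (fun x => repZ m n x) with ht
  have hcards : t.card + s.card = (Finset.Icc (0 : ℤ) F).card :=
    Finset.card_filter_add_card_filter_not (fun x => repZ m n x)
  have hIcc : (Finset.Icc (0 : ℤ) F).card = 2 * semiR m n := by
    rw [Int.card_Icc]
    omega
  have himg : t.image (fun x => F - x) = s := by
    apply Finset.ext
    intro y
    simp only [Finset.mem_image, hs, ht, Finset.mem_filter, Finset.mem_Icc]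
    constructor
    · rintro ⟨x, ⟨⟨hx0, hxF⟩, hxr⟩, rfl⟩
      refine ⟨⟨by linarith, by linarith⟩, ?_⟩
      intro hrep
      apply not_repZ_F hm2 hn2 h
      obtain ⟨a1, b1, e1⟩ := hxr
      obtain ⟨a2, b2, e2⟩ := hrep
      exact ⟨a1 + a2, b1 + b2, by push_cast; linarith⟩
    · rintro ⟨⟨hy0, hyF⟩, hyr⟩
      rcases repZ_or hm2 hn2 h y hy0 with hrep | hrep
      · exact absurd hrep hyr
      · exact ⟨F - y, ⟨⟨by linarith, by linarith⟩, hrep⟩, by ring⟩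
  have hinj : Function.Injective (fun x : ℤ => F - x) := fun x y hxy => by
    simpa using sub_right_injective hxy
  have hcard_img : t.card = s.card := by
    rw [← himg, Finset.card_image_of_injective _ hinj]
  omega

/-- Closure of a `(m,n)`-closed set under adding representable elements. -/
lemma mem_of_repZ {m n : ℕ} {C : Set ℤ}
    (hCm : ∀ a ∈ C, a + (m : ℤ) ∈ C) (hCn : ∀ a ∈ C, a + (n : ℤ) ∈ C)
    {c x : ℤ} (hc : c ∈ C) (hx : repZ m n x) : c + x ∈ C := by
  obtain ⟨a, b, rfl⟩ := hx
  have hmstep : ∀ (k : ℕ) (y : ℤ), y ∈ C → y + k * m ∈ C := by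
    intro k
    induction k with
    | zero => intro y hy; simpa using hy
    | succ k ih =>
      intro y hy
      have h1 := hCm _ (ih y hy)
      have e : y + ((k : ℤ) + 1) * m = y + (k : ℤ) * m + m := by ring
      push_cast
      rw [e]
      exact h1
  have hnstep : ∀ (k : ℕ) (y : ℤ), y ∈ C → y + k * n ∈ C := by
    intro k
    induction k with
    | zero => intro y hy; simpa using hy
    | succ k ih =>
      intro y hy
      have h1 := hCn _ (ih y hy)
      have e : y + ((k : ℤ) + 1) * n = y + (k : ℤ) * n + n := by ring
      push_cast
      rw [e]
      exact h1
  have := hnstep b _ (hmstep a c hc)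
  rwa [add_assoc] at this

/-- If two normalized semi-modules differ by a positive shift, contradiction. -/
lemma shift_lemma {m n : ℕ} {A₁ A₂ : Set ℤ} (d : ℤ) (hd : 0 < d)
    (h1 : IsNormalizedSemiModule m n A₁) (h2 : IsNormalizedSemiModule m n A₂)
    (hshift : A₂ = (fun a => a + d) '' A₁) : False := by
  obtain ⟨_, h1pos, h1big, h1card⟩ := h1
  obtain ⟨_, h2pos, h2big, h2card⟩ := h2
  set r := semiR m n with hr
  have hG2fin : ({x : ℤ | 0 ≤ x} \ A₂).Finite := by
    apply Set.Finite.subset (Set.finite_Ico (0 : ℤ) (2 * r))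
    rintro x ⟨hx0, hxA⟩
    refine ⟨hx0, ?_⟩
    by_contra hge
    push_neg at hge
    exact hxA (h2big x hge)
  have hG1fin : ({x : ℤ | 0 ≤ x} \ A₁).Finite := by
    apply Set.Finite.subset (Set.finite_Ico (0 : ℤ) (2 * r))
    rintro x ⟨hx0, hxA⟩
    refine ⟨hx0, ?_⟩
    by_contra hge
    push_neg at hge
    exact hxA (h1big x hge)
  have hsub : Set.Ico (0 : ℤ) d ∪ (fun g => g + d) '' ({x : ℤ | 0 ≤ x} \ A₁) ⊆
      {x : ℤ | 0 ≤ x} \ A₂ := by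
    rintro x (⟨hx0, hxd⟩ | ⟨g, ⟨hg0, hgA⟩, rfl⟩)
    · refine ⟨hx0, ?_⟩
      intro hxA
      rw [hshift] at hxA
      obtain ⟨a, ha, hae⟩ := hxA
      have hae' : a + d = x := hae
      have := h1pos a ha
      omega
    · simp only [Set.mem_setOf_eq] at hg0
      refine ⟨show (0:ℤ) ≤ g + d by omega, ?_⟩
      intro hxA
      rw [hshift] at hxA
      obtain ⟨a, ha, hae⟩ := hxA
      have hae' : a + d = g + d := hae
      have : a = g := by omega
      exact hgA (this ▸ ha)
  have hdisj : Disjoint (Set.Ico (0 : ℤ) d) ((fun g => g + d) '' ({x : ℤ | 0 ≤ x} \ A₁)) := by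
    rw [Set.disjoint_left]
    rintro x ⟨hx0, hxd⟩ ⟨g, ⟨hg0, _⟩, rfl⟩
    simp only [Set.mem_setOf_eq] at hg0
    have hxd' : g + d < d := hxd
    omega
  have hcard_le : (Set.Ico (0 : ℤ) d ∪ (fun g => g + d) '' ({x : ℤ | 0 ≤ x} \ A₁)).ncard ≤ r := by
    rw [← h2card]
    exact Set.ncard_le_ncard hsub hG2fin
  rw [Set.ncard_union_eq hdisj (Set.finite_Ico _ _) (hG1fin.image _),
    Set.ncard_image_of_injective _ (add_left_injective d), h1card] at hcard_le
  have hIco : (Set.Ico (0 : ℤ) d).ncard = d.toNat := by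
    rw [← Finset.coe_Ico, Set.ncard_coe_finset, Int.card_Ico]
    simp
  rw [hIco] at hcard_le
  omega

end SemiModuleAux

open SemiModuleAux in
/-- Every `(m,n)`-semi-module is equivalent, by a unique translation, to a
normalized semi-module. -/
theorem unique_normalization_of_semimodule
    (m n : ℕ) (hm : 0 < m) (hn : 0 < n) (h : Nat.Coprime m n)
    (B : Set ℤ) (hB : IsSemiModule m n B) :
    ∃! t : ℤ, IsNormalizedSemiModule m n ((fun b => b + t) '' B) := by
  classical
  obtain ⟨hne, hbdd, hBm, hBn⟩ := hB
  obtain ⟨b₀, hb₀B, hb₀min⟩ := Int.exists_least_of_bdd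
    (P := fun z => z ∈ B) (by obtain ⟨b, hb⟩ := hbdd; exact ⟨b, hb⟩) hne
  set r := semiR m n with hr
  have h2r : (2 * (r : ℤ)) = ((m : ℤ) - 1) * ((n : ℤ) - 1) := by
    have := two_semiR hm hn h
    zify [show 1 ≤ m from hm, show 1 ≤ n from hn] at this
    rw [hr, ← this]
  have frob : ∀ x : ℤ, 2 * (r : ℤ) ≤ x → repZ m n x := fun x hx =>
    repZ_of_le hm hn h x (by linarith)
  have hGfin : {x : ℤ | 0 ≤ x ∧ ¬ repZ m n x}.Finite := by
    apply Set.Finite.subset (Set.finite_Ico (0 : ℤ) (2 * r))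
    rintro x ⟨hx0, hxr⟩
    refine ⟨hx0, ?_⟩
    by_contra hge
    push_neg at hge
    exact hxr (frob x (by push_cast at hge ⊢; linarith))
  -- the translated-to-zero version of B
  set C : Set ℤ := {x | x + b₀ ∈ B} with hC
  have hC0 : (0 : ℤ) ∈ C := by simpa [hC] using hb₀B
  have hCpos : ∀ x ∈ C, 0 ≤ x := fun x hx => by
    have := hb₀min _ hx; linarith
  have hCm : ∀ a ∈ C, a + (m : ℤ) ∈ C := by
    intro a ha
    show a + (m : ℤ) + b₀ ∈ B
    have := hBm _ ha
    have e : a + (m : ℤ) + b₀ = a + b₀ + m := by ring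
    rwa [e]
  have hCn : ∀ a ∈ C, a + (n : ℤ) ∈ C := by
    intro a ha
    show a + (n : ℤ) + b₀ ∈ B
    have := hBn _ ha
    have e : a + (n : ℤ) + b₀ = a + b₀ + n := by ring
    rwa [e]
  have hrepC : ∀ x : ℤ, repZ m n x → x ∈ C := fun x hx => by
    have := mem_of_repZ hCm hCn hC0 hx
    simpa using this
  set GapsC : Set ℤ := {x : ℤ | 0 ≤ x} \ C with hGapsC
  have hGC_sub : GapsC ⊆ {x : ℤ | 0 ≤ x ∧ ¬ repZ m n x} := by
    rintro x ⟨hx0, hxC⟩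
    exact ⟨hx0, fun hrep => hxC (hrepC x hrep)⟩
  have hGCfin : GapsC.Finite := hGfin.subset hGC_sub
  set k₀ := GapsC.ncard with hk₀def
  have hk₀ : k₀ ≤ r := by
    rw [hk₀def, hr, ← sylvester hm hn h]
    exact Set.ncard_le_ncard hGC_sub hGfin
  -- gap bound
  have hgap : ∀ g ∈ GapsC, g + 1 ≤ (r : ℤ) + k₀ := by
    rintro g ⟨hg0, hgC⟩
    simp only [Set.mem_setOf_eq] at hg0
    have key1 : (Set.Icc 0 g ∩ C).ncard ≤ r := by
      rw [hr, ← sylvester hm hn h]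
      refine Set.ncard_le_ncard_of_injOn (fun y => g - y) ?_ ?_ hGfin
      · rintro y ⟨⟨hy0, hyg⟩, hyC⟩
        show 0 ≤ g - y ∧ ¬ repZ m n (g - y)
        refine ⟨by omega, ?_⟩
        intro hrep'
        apply hgC
        have := mem_of_repZ hCm hCn hyC hrep'
        simpa using this
      · exact fun x _ y _ hxy => by simpa using sub_right_injective hxy
    have key2 : (Set.Icc 0 g \ C).ncard ≤ k₀ := by
      rw [hk₀def]
      apply Set.ncard_le_ncard _ hGCfin
      rintro y ⟨⟨hy0, _⟩, hyC⟩
      exact ⟨hy0, hyC⟩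
    have key3 : (Set.Icc 0 g ∩ C).ncard + (Set.Icc 0 g \ C).ncard = (Set.Icc 0 g).ncard :=
      Set.ncard_inter_add_ncard_diff_eq_ncard _ _ (Set.finite_Icc _ _)
    have key4 : (Set.Icc (0 : ℤ) g).ncard = (g + 1).toNat := by
      rw [← Finset.coe_Icc, Set.ncard_coe_finset, Int.card_Icc]
      simp
    omega
  set a₀ : ℕ := r - k₀ with ha₀def
  have ha₀ : (a₀ : ℤ) = (r : ℤ) - k₀ := by omega
  set t : ℤ := (a₀ : ℤ) - b₀ with htdef
  have hA : ∀ x : ℤ, x ∈ (fun b => b + t) '' B ↔ x - (a₀ : ℤ) ∈ C := by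
    intro x
    simp only [Set.mem_image, hC, Set.mem_setOf_eq]
    constructor
    · rintro ⟨b, hb, rfl⟩
      have e : b + t - (a₀ : ℤ) + b₀ = b := by rw [htdef]; ring
      rwa [e]
    · intro hx
      exact ⟨x - (a₀ : ℤ) + b₀, hx, by rw [htdef]; ring⟩
  have hnorm : IsNormalizedSemiModule m n ((fun b => b + t) '' B) := by
    refine ⟨⟨⟨b₀ + t, ⟨b₀, hb₀B, rfl⟩⟩, ⟨b₀ + t, ?_⟩, ?_, ?_⟩, ?_, ?_, ?_⟩
    · rintro a ⟨b, hb, rfl⟩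
      have := hb₀min _ hb
      show b₀ + t ≤ b + t
      linarith
    · rintro a ⟨b, hb, rfl⟩
      exact ⟨b + m, hBm b hb, by ring⟩
    · rintro a ⟨b, hb, rfl⟩
      exact ⟨b + n, hBn b hb, by ring⟩
    · intro a ha
      rw [hA] at ha
      have := hCpos _ ha
      have ha0 : (0 : ℤ) ≤ (a₀ : ℤ) := by positivity
      omega
    · intro x hx
      rw [hA]
      by_contra hxC
      have hr0 : (0 : ℤ) ≤ (r : ℤ) := by positivity
      have hk0 : (0 : ℤ) ≤ (k₀ : ℤ) := by positivity
      have hx0 : 0 ≤ x - (a₀ : ℤ) := by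
        rw [ha₀]; linarith
      have hginG : x - (a₀ : ℤ) ∈ GapsC := ⟨hx0, hxC⟩
      have := hgap _ hginG
      rw [ha₀] at *
      linarith
    · -- gap count
      have hGeq : {x : ℤ | 0 ≤ x} \ ((fun b => b + t) '' B) =
          Set.Ico (0 : ℤ) (a₀ : ℤ) ∪ (fun g => g + (a₀ : ℤ)) '' GapsC := by
        ext x
        simp only [Set.mem_diff, Set.mem_setOf_eq, Set.mem_union, Set.mem_Ico,
          Set.mem_image, hA]
        constructor
        · rintro ⟨hx0, hxA⟩
          rcases lt_or_ge x (a₀ : ℤ) with hlt | hge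
          · exact Or.inl ⟨hx0, hlt⟩
          · exact Or.inr ⟨x - (a₀ : ℤ), ⟨show (0 : ℤ) ≤ x - (a₀ : ℤ) by omega, hxA⟩,
              show x - (a₀ : ℤ) + (a₀ : ℤ) = x by ring⟩
        · rintro (⟨hx0, hxlt⟩ | ⟨g, ⟨hg0, hgC⟩, rfl⟩)
          · refine ⟨hx0, ?_⟩
            intro hmem
            have := hCpos _ hmem
            omega
          · simp only [Set.mem_setOf_eq] at hg0
            refine ⟨show (0 : ℤ) ≤ g + (a₀ : ℤ) by omega, ?_⟩
            show ¬ (g + (a₀ : ℤ) - (a₀ : ℤ) ∈ C)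
            have e : g + (a₀ : ℤ) - (a₀ : ℤ) = g := by ring
            rw [e]
            exact hgC
      rw [hGeq]
      have hdisj : Disjoint (Set.Ico (0 : ℤ) (a₀ : ℤ)) ((fun g => g + (a₀ : ℤ)) '' GapsC) := by
        rw [Set.disjoint_left]
        rintro x ⟨hx0, hxlt⟩ ⟨g, ⟨hg0, _⟩, rfl⟩
        simp only [Set.mem_setOf_eq] at hg0
        have hxlt' : g + (a₀ : ℤ) < (a₀ : ℤ) := hxlt
        omega
      rw [Set.ncard_union_eq hdisj (Set.finite_Ico _ _) (hGCfin.image _),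
        Set.ncard_image_of_injective _ (add_left_injective _)]
      have hIco : (Set.Ico (0 : ℤ) (a₀ : ℤ)).ncard = a₀ := by
        rw [← Finset.coe_Ico, Set.ncard_coe_finset, Int.card_Ico]
        simp
      rw [hIco, ← hk₀def]
      omega
  refine ⟨t, hnorm, ?_⟩
  intro t' hnorm'
  by_contra hne'
  rcases lt_or_gt_of_ne hne' with hlt | hgt
  · -- t' < t
    apply shift_lemma (t - t') (by omega) hnorm' hnorm
    rw [Set.image_image]
    apply Set.image_congr
    intro b _
    ring
  · -- t < t'
    apply shift_lemma (t' - t) (by omega) hnorm hnorm'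
    rw [Set.image_image]
    apply Set.image_congr
    intro b _
    ring
end

section
/- Let K be a perfect field of characteristic p, W(K) its ring of p-adic Witt vectors, σ the Frobenius automorphism of W(K), and R_K = W(K)[F,V] the Dieudonné ring with relations FV = VF = p, Fx = σ(x)F, xV = V σ(x) for x ∈ W(K). Define v(Σ_{i∈ℤ} a_i V^i) = min_i (ord_p(a_i) + i) on the completed ring W(K)[[V, F⟩⟩ of sums Σ_{i∈ℤ} a_i V^i with a_i in the fraction field of W(K), ord_p(a_i) ≥ max(0, −i), and ord_p(a_i) + i → ∞ as |i| → ∞. Then v is a (discrete) valuation: v(xy) = v(x) + v(y) and v(x + y) ≥ min(v(x), v(y)) for all x, y. -/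
section Aux

variable {B : Type*} [Field B] (w : B → WithTop ℤ)

lemma aux_succ (n : ℤ) (x : WithTop ℤ) (h : (n : WithTop ℤ) < x) :
    ((n + 1 : ℤ) : WithTop ℤ) ≤ x := by
  cases x with
  | top => simp
  | coe m => exact_mod_cast h

lemma aux_w1 (hw0 : ∀ x : B, w x = ⊤ ↔ x = 0)
    (hwmul : ∀ x y : B, w (x * y) = w x + w y) : w 1 = 0 := by
  have h := hwmul 1 1
  rw [one_mul] at h
  have h1 : w 1 ≠ ⊤ := fun hh => one_ne_zero ((hw0 1).mp hh)
  cases hx : w (1 : B) with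
  | top => exact absurd hx h1
  | coe m =>
    rw [hx] at h
    have : m = m + m := by exact_mod_cast h
    have : m = 0 := by omega
    simp [this]

lemma aux_wneg (hw0 : ∀ x : B, w x = ⊤ ↔ x = 0)
    (hwmul : ∀ x y : B, w (x * y) = w x + w y) (x : B) : w (-x) = w x := by
  have hm1 : w (-1 : B) = 0 := by
    have h := hwmul (-1) (-1)
    rw [neg_mul_neg, one_mul, aux_w1 w hw0 hwmul] at h
    have h1 : w (-1 : B) ≠ ⊤ := fun hh => (neg_ne_zero.mpr one_ne_zero) ((hw0 _).mp hh)
    cases hx : w (-1 : B) with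
    | top => exact absurd hx h1
    | coe m =>
      rw [hx] at h
      have : (0 : ℤ) = m + m := by exact_mod_cast h
      have : m = 0 := by omega
      simp [this]
  calc w (-x) = w ((-1) * x) := by rw [neg_one_mul]
    _ = w (-1 : B) + w x := hwmul _ _
    _ = w x := by rw [hm1, zero_add]

/-- If `w s = m` and `w t ≥ m + 1` then `w (s + t) = m`. -/
lemma aux_weq (hw0 : ∀ x : B, w x = ⊤ ↔ x = 0)
    (hwmul : ∀ x y : B, w (x * y) = w x + w y)
    (hwadd : ∀ x y : B, min (w x) (w y) ≤ w (x + y))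
    (s t : B) (m : ℤ) (hs : w s = (m : ℤ)) (ht : ((m + 1 : ℤ) : WithTop ℤ) ≤ w t) :
    w (s + t) = (m : ℤ) := by
  have hge : (m : WithTop ℤ) ≤ w (s + t) := by
    refine le_trans ?_ (hwadd s t)
    rw [hs]
    refine le_min le_rfl (le_trans ?_ ht)
    exact_mod_cast (by omega : m ≤ m + 1)
  have hle : w (s + t) ≤ (m : WithTop ℤ) := by
    by_contra hlt
    push_neg at hlt
    have h2 : ((m + 1 : ℤ) : WithTop ℤ) ≤ w (s + t) := aux_succ _ _ hlt
    have : min (w (s + t)) (w (-t)) ≤ w (s + t + -t) := hwadd _ _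
    rw [add_neg_cancel_right, hs, aux_wneg w hw0 hwmul] at this
    have : ((m + 1 : ℤ) : WithTop ℤ) ≤ (m : WithTop ℤ) :=
      le_trans (le_min h2 ht) this
    exact absurd this (by exact_mod_cast (by omega : ¬ (m + 1 : ℤ) ≤ m))
  exact le_antisymm hle hge

/-- finite-sum ultrametric inequality, shifted by a constant `κ`. -/
lemma aux_wsum (hwadd : ∀ x y : B, min (w x) (w y) ≤ w (x + y))
    (T : Finset ℤ) (f : ℤ → B) (κ : ℤ) (P : WithTop ℤ)
    (h0 : w 0 = ⊤)
    (h : ∀ i ∈ T, P ≤ w (f i) + (κ : WithTop ℤ)) :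
    P ≤ w (∑ i ∈ T, f i) + (κ : WithTop ℤ) := by
  induction T using Finset.cons_induction with
  | empty => simp [h0]
  | cons a s ha ih =>
    rw [Finset.sum_cons]
    have h1 : P ≤ w (f a) + (κ : WithTop ℤ) := h a (Finset.mem_cons_self a s)
    have h2 : P ≤ w (∑ i ∈ s, f i) + (κ : WithTop ℤ) :=
      ih fun i hi => h i (Finset.mem_cons_of_mem hi)
    have h3 : min (w (f a)) (w (∑ i ∈ s, f i)) ≤ w (f a + ∑ i ∈ s, f i) := hwadd _ _
    calc P ≤ min (w (f a) + (κ : WithTop ℤ)) (w (∑ i ∈ s, f i) + (κ : WithTop ℤ)) :=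
          le_min h1 h2
      _ = min (w (f a)) (w (∑ i ∈ s, f i)) + (κ : WithTop ℤ) := min_add_add_right _ _ _
      _ ≤ w (f a + ∑ i ∈ s, f i) + (κ : WithTop ℤ) := add_le_add_left h3 _

lemma aux_wsum0 (hwadd : ∀ x y : B, min (w x) (w y) ≤ w (x + y))
    (T : Finset ℤ) (f : ℤ → B) (P : WithTop ℤ)
    (h0 : w 0 = ⊤)
    (h : ∀ i ∈ T, P ≤ w (f i)) :
    P ≤ w (∑ i ∈ T, f i) := by
  have := aux_wsum w hwadd T f 0 P h0 (by intro i hi; simpa using h i hi)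
  simpa using this

lemma aux_wσz (σ : B ≃+* B) (hwσ : ∀ x : B, w (σ x) = w x) (n : ℤ) (x : B) :
    w ((σ ^ n : B ≃+* B) x) = w x := by
  have hinv : ∀ y : B, w (σ.symm y) = w y := by
    intro y
    conv_rhs => rw [← σ.apply_symm_apply y]
    rw [hwσ]
  induction n using Int.induction_on generalizing x with
  | zero => rw [zpow_zero]; rfl
  | succ k ih =>
    have : (σ ^ ((k : ℤ) + 1) : B ≃+* B) x = (σ ^ (k : ℤ) : B ≃+* B) (σ x) := by
      rw [zpow_add_one]; rfl
    rw [this, ih (σ x), hwσ]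
  | pred k ih =>
    have : (σ ^ (-(k : ℤ) - 1) : B ≃+* B) x = (σ ^ (-(k : ℤ)) : B ≃+* B) (σ.symm x) := by
      rw [zpow_sub_one]; rfl
    rw [this, ih (σ.symm x), hinv]

end Aux

/-- The function `v(Σ a_i V^i) = min_i (ord_p(a_i) + i)` on the completed
Dieudonné ring `W(K)[[V,F⟩⟩` is a discrete valuation: it is multiplicative on
products and satisfies the ultrametric inequality on sums.  Here `B` plays the
role of the fraction field of `W(K)` with its `p`-adic valuation `w`
(`σ`-invariant for the Witt Frobenius `σ`), elements `Σ_{i∈ℤ} a_i V^i` are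
encoded by their coefficient families `a : ℤ → B` satisfying
`ord_p(a_i) ≥ max(0, −i)` and `ord_p(a_i) + i → ∞`, the product `c` of `a`
and `b` has coefficients `c_k = Σ_{i+j=k} a_i σ^{−i}(b_j)` (a convergent sum,
expressed via `w`), and the value of `v` is expressed as a greatest lower
bound. -/
theorem dieudonne_ring_valuation
    (p : ℕ) (hp : p.Prime)
    (B : Type*) [Field B] (σ : B ≃+* B)
    (w : B → WithTop ℤ)
    (hw0 : ∀ x : B, w x = ⊤ ↔ x = 0)
    (hwmul : ∀ x y : B, w (x * y) = w x + w y)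
    (hwadd : ∀ x y : B, min (w x) (w y) ≤ w (x + y))
    (hwσ : ∀ x : B, w (σ x) = w x)
    (hwp : w (p : B) = 1)
    (a b c : ℤ → B)
    (ha1 : ∀ i : ℤ, ((max 0 (-i) : ℤ) : WithTop ℤ) ≤ w (a i))
    (hb1 : ∀ i : ℤ, ((max 0 (-i) : ℤ) : WithTop ℤ) ≤ w (b i))
    (ha2 : ∀ N : ℤ, ∃ M : ℕ, ∀ i : ℤ, (M : ℤ) ≤ |i| →
      (N : WithTop ℤ) ≤ w (a i) + (i : WithTop ℤ))
    (hb2 : ∀ N : ℤ, ∃ M : ℕ, ∀ i : ℤ, (M : ℤ) ≤ |i| →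
      (N : WithTop ℤ) ≤ w (b i) + (i : WithTop ℤ))
    (hc : ∀ k N : ℤ, ∃ S : Finset ℤ, ∀ T : Finset ℤ, S ⊆ T →
      (N : WithTop ℤ) ≤ w (c k - ∑ i ∈ T, a i * (σ ^ (-i) : B ≃+* B) (b (k - i))))
    (va vb vc : WithTop ℤ)
    (hva : IsGLB (Set.range fun i : ℤ => w (a i) + (i : WithTop ℤ)) va)
    (hvb : IsGLB (Set.range fun i : ℤ => w (b i) + (i : WithTop ℤ)) vb)
    (hvc : IsGLB (Set.range fun i : ℤ => w (c i) + (i : WithTop ℤ)) vc) :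
    vc = va + vb ∧
    ∀ vs : WithTop ℤ,
      IsGLB (Set.range fun i : ℤ => w (a i + b i) + (i : WithTop ℤ)) vs →
      min va vb ≤ vs := by
  have hw0' : w 0 = ⊤ := (hw0 0).mpr rfl
  have hwσz := aux_wσz w σ hwσ
  -- valuation of a product term
  have hterm : ∀ k i : ℤ,
      w (a i * (σ ^ (-i) : B ≃+* B) (b (k - i))) = w (a i) + w (b (k - i)) := by
    intro k i
    rw [hwmul, hwσz]
  -- lower bounds from GLBs
  have hvaLB : ∀ i : ℤ, va ≤ w (a i) + (i : WithTop ℤ) :=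
    fun i => hva.1 (Set.mem_range_self i)
  have hvbLB : ∀ i : ℤ, vb ≤ w (b i) + (i : WithTop ℤ) :=
    fun i => hvb.1 (Set.mem_range_self i)
  -- Step 1: va + vb is a lower bound for the coefficients of c (shifted)
  have step1 : ∀ k : ℤ, va + vb ≤ w (c k) + (k : WithTop ℤ) := by
    intro k
    by_contra hlt
    push_neg at hlt
    -- w (c k) is finite
    obtain ⟨m, hm⟩ : ∃ m : ℤ, w (c k) = (m : ℤ) := by
      cases hx : w (c k) with
      | top => rw [hx] at hlt; simp at hlt
      | coe m => exact ⟨m, rfl⟩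
    obtain ⟨S, hS⟩ := hc k (m + 1)
    have hSS := hS S (Finset.Subset.refl S)
    -- partial sum has large valuation (shifted by k)
    have hsum : va + vb ≤ w (∑ i ∈ S, a i * (σ ^ (-i) : B ≃+* B) (b (k - i)))
        + (k : WithTop ℤ) := by
      refine aux_wsum w hwadd S _ k _ hw0' ?_
      intro i _
      rw [hterm]
      have ekk : ((k : ℤ) : WithTop ℤ) = ((i : ℤ) : WithTop ℤ) + ((k - i : ℤ) : WithTop ℤ) := by
        rw [← WithTop.coe_add]; congr 1; omega
      calc va + vb ≤ (w (a i) + (i : WithTop ℤ)) + (w (b (k - i)) + ((k - i : ℤ) : WithTop ℤ)) :=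
            add_le_add (hvaLB i) (hvbLB (k - i))
        _ = w (a i) + w (b (k - i)) + (k : WithTop ℤ) := by
            rw [ekk]; abel
    set s := ∑ i ∈ S, a i * (σ ^ (-i) : B ≃+* B) (b (k - i)) with hs
    -- c k = (c k - s) + s
    have hck : w (c k) = w ((c k - s) + s) := by rw [sub_add_cancel]
    have h1 : min (w (c k - s)) (w s) ≤ w (c k) := by
      rw [hck]; exact hwadd _ _
    -- the min must be w s, and w s ≤ m
    have hws : w s ≤ (m : WithTop ℤ) := by
      rcases min_cases (w (c k - s)) (w s) with ⟨heq, hle⟩ | ⟨heq, hle⟩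
      · exfalso
        rw [heq, hm] at h1
        have : ((m + 1 : ℤ) : WithTop ℤ) ≤ (m : WithTop ℤ) := le_trans hSS h1
        exact absurd this (by exact_mod_cast (by omega : ¬ (m + 1 : ℤ) ≤ m))
      · rw [heq, hm] at h1; exact h1
    have : va + vb ≤ (m : WithTop ℤ) + (k : WithTop ℤ) :=
      le_trans hsum (add_le_add_left hws _)
    rw [hm] at hlt
    exact absurd (lt_of_le_of_lt this hlt) (lt_irrefl _)
  have hLB : va + vb ≤ vc := hvc.2 (by rintro x ⟨k, rfl⟩; exact step1 k)
  -- Step 2: vc ≤ va + vb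
  have step2 : vc ≤ va + vb := by
    cases hA : va with
    | top => rw [top_add]; exact le_top
    | coe nA =>
    cases hB : vb with
    | top => rw [add_top]; exact le_top
    | coe nB =>
    -- find minimal index attaining va
    have attainA : ∃ i : ℤ, w (a i) + (i : WithTop ℤ) = (nA : WithTop ℤ) := by
      by_contra hno
      push_neg at hno
      have : (((nA + 1 : ℤ)) : WithTop ℤ) ≤ va := by
        refine hva.2 ?_
        rintro x ⟨i, rfl⟩
        refine aux_succ nA _ (lt_of_le_of_ne ?_ ?_)
        · rw [← hA]; exact hvaLB i
        · exact fun h => hno i h.symm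
      rw [hA] at this
      exact absurd this (by exact_mod_cast (by omega : ¬ (nA + 1 : ℤ) ≤ nA))
    have attainB : ∃ j : ℤ, w (b j) + (j : WithTop ℤ) = (nB : WithTop ℤ) := by
      by_contra hno
      push_neg at hno
      have : (((nB + 1 : ℤ)) : WithTop ℤ) ≤ vb := by
        refine hvb.2 ?_
        rintro x ⟨j, rfl⟩
        refine aux_succ nB _ (lt_of_le_of_ne ?_ ?_)
        · rw [← hB]; exact hvbLB j
        · exact fun h => hno j h.symm
      rw [hB] at this
      exact absurd this (by exact_mod_cast (by omega : ¬ (nB + 1 : ℤ) ≤ nB))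
    -- boundedness below of attaining sets
    obtain ⟨MA, hMA⟩ := ha2 (nA + 1)
    obtain ⟨MB, hMB⟩ := hb2 (nB + 1)
    have bddA : ∀ i : ℤ, w (a i) + (i : WithTop ℤ) = (nA : WithTop ℤ) → -(MA : ℤ) ≤ i := by
      intro i hi
      by_contra hcon
      push_neg at hcon
      have : (MA : ℤ) ≤ |i| := by rw [le_abs]; right; omega
      have := hMA i this
      rw [hi] at this
      exact absurd this (by exact_mod_cast (by omega : ¬ (nA + 1 : ℤ) ≤ nA))
    have bddB : ∀ j : ℤ, w (b j) + (j : WithTop ℤ) = (nB : WithTop ℤ) → -(MB : ℤ) ≤ j := by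
      intro j hj
      by_contra hcon
      push_neg at hcon
      have : (MB : ℤ) ≤ |j| := by rw [le_abs]; right; omega
      have := hMB j this
      rw [hj] at this
      exact absurd this (by exact_mod_cast (by omega : ¬ (nB + 1 : ℤ) ≤ nB))
    obtain ⟨iA, hiA, hiAmin⟩ := Int.exists_least_of_bdd ⟨-(MA : ℤ), bddA⟩ attainA
    obtain ⟨jB, hjB, hjBmin⟩ := Int.exists_least_of_bdd ⟨-(MB : ℤ), bddB⟩ attainB
    set k := iA + jB with hk
    set m := nA + nB - k with hm
    -- valuations of individual coefficients
    have hwaiA : w (a iA) = ((nA - iA : ℤ) : WithTop ℤ) := by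
      cases hx : w (a iA) with
      | top => rw [hx, top_add] at hiA; exact absurd hiA (by simp)
      | coe v =>
        rw [hx] at hiA
        have : v + iA = nA := by exact_mod_cast hiA
        exact_mod_cast congrArg (fun z : ℤ => ((z : WithTop ℤ))) (by omega : v = nA - iA)
    have hwbjB : w (b jB) = ((nB - jB : ℤ) : WithTop ℤ) := by
      cases hx : w (b jB) with
      | top => rw [hx, top_add] at hjB; exact absurd hjB (by simp)
      | coe v =>
        rw [hx] at hjB
        have : v + jB = nB := by exact_mod_cast hjB
        exact_mod_cast congrArg (fun z : ℤ => ((z : WithTop ℤ))) (by omega : v = nB - jB)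
    -- the term at i = iA has valuation exactly m
    have hmain : w (a iA * (σ ^ (-iA) : B ≃+* B) (b (k - iA))) = (m : WithTop ℤ) := by
      rw [hterm, hwaiA]
      have : k - iA = jB := by omega
      rw [this, hwbjB, ← WithTop.coe_add]
      congr 1
      omega
    -- all other terms have valuation ≥ m + 1
    have hother : ∀ i : ℤ, i ≠ iA →
        ((m + 1 : ℤ) : WithTop ℤ) ≤ w (a i * (σ ^ (-i) : B ≃+* B) (b (k - i))) := by
      intro i hi
      rw [hterm]
      rcases lt_or_gt_of_ne hi with hlt | hgt
      · -- i < iA : strict bound on a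
        have hstrict : ((nA + 1 : ℤ) : WithTop ℤ) ≤ w (a i) + (i : WithTop ℤ) := by
          refine aux_succ nA _ (lt_of_le_of_ne ?_ ?_)
          · rw [← hA]; exact hvaLB i
          · intro h
            have := hiAmin i h.symm
            omega
        have hb' : (nB : WithTop ℤ) ≤ w (b (k - i)) + ((k - i : ℤ) : WithTop ℤ) :=
          by rw [← hB]; exact hvbLB (k - i)
        have hsum := add_le_add hstrict hb'
        have ekk : ((k : ℤ) : WithTop ℤ) = ((i : ℤ) : WithTop ℤ) + ((k - i : ℤ) : WithTop ℤ) := by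
          rw [← WithTop.coe_add]; congr 1; omega
        rw [← WithTop.add_le_add_iff_right (show ((k : ℤ) : WithTop ℤ) ≠ ⊤ by simp)]
        calc ((m + 1 : ℤ) : WithTop ℤ) + (k : WithTop ℤ)
            = ((nA + 1 : ℤ) : WithTop ℤ) + ((nB : ℤ) : WithTop ℤ) := by
              rw [← WithTop.coe_add, ← WithTop.coe_add]; congr 1; omega
          _ ≤ (w (a i) + (i : WithTop ℤ)) + (w (b (k - i)) + ((k - i : ℤ) : WithTop ℤ)) := hsum
          _ = w (a i) + w (b (k - i)) + (k : WithTop ℤ) := by rw [ekk]; abel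
      · -- i > iA : then k - i < jB, strict bound on b
        have hstrict : ((nB + 1 : ℤ) : WithTop ℤ) ≤ w (b (k - i)) + ((k - i : ℤ) : WithTop ℤ) := by
          refine aux_succ nB _ (lt_of_le_of_ne ?_ ?_)
          · rw [← hB]; exact hvbLB (k - i)
          · intro h
            have := hjBmin (k - i) h.symm
            omega
        have ha' : (nA : WithTop ℤ) ≤ w (a i) + (i : WithTop ℤ) :=
          by rw [← hA]; exact hvaLB i
        have hsum := add_le_add ha' hstrict
        have ekk : ((k : ℤ) : WithTop ℤ) = ((i : ℤ) : WithTop ℤ) + ((k - i : ℤ) : WithTop ℤ) := by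
          rw [← WithTop.coe_add]; congr 1; omega
        rw [← WithTop.add_le_add_iff_right (show ((k : ℤ) : WithTop ℤ) ≠ ⊤ by simp)]
        calc ((m + 1 : ℤ) : WithTop ℤ) + (k : WithTop ℤ)
            = ((nA : ℤ) : WithTop ℤ) + ((nB + 1 : ℤ) : WithTop ℤ) := by
              rw [← WithTop.coe_add, ← WithTop.coe_add]; congr 1; omega
          _ ≤ (w (a i) + (i : WithTop ℤ)) + (w (b (k - i)) + ((k - i : ℤ) : WithTop ℤ)) := hsum
          _ = w (a i) + w (b (k - i)) + (k : WithTop ℤ) := by rw [ekk]; abel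
    -- now compute w (c k)
    obtain ⟨S, hS⟩ := hc k (m + 1)
    classical
    set T : Finset ℤ := insert iA S with hT
    set f : ℤ → B := fun i => a i * (σ ^ (-i) : B ≃+* B) (b (k - i)) with hf
    have hiAT : iA ∈ T := Finset.mem_insert_self _ _
    have hrest : ((m + 1 : ℤ) : WithTop ℤ) ≤ w (∑ i ∈ T.erase iA, f i) := by
      refine aux_wsum0 w hwadd _ _ _ hw0' ?_
      intro i hi
      exact hother i (Finset.ne_of_mem_erase hi)
    have hsplit : f iA + ∑ i ∈ T.erase iA, f i = ∑ i ∈ T, f i :=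
      Finset.add_sum_erase T f hiAT
    have hwsT : w (∑ i ∈ T, f i) = (m : WithTop ℤ) := by
      rw [← hsplit]
      exact aux_weq w hw0 hwmul hwadd _ _ m hmain hrest
    have hdiff : ((m + 1 : ℤ) : WithTop ℤ) ≤ w (c k - ∑ i ∈ T, f i) :=
      hS T (Finset.subset_insert _ _)
    have hck : w (c k) = (m : WithTop ℤ) := by
      have heq : (∑ i ∈ T, f i) + (c k - ∑ i ∈ T, f i) = c k := by ring
      rw [← heq]
      exact aux_weq w hw0 hwmul hwadd _ _ m hwsT hdiff
    have : vc ≤ w (c k) + (k : WithTop ℤ) := hvc.1 (Set.mem_range_self k)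
    rw [hck, ← WithTop.coe_add] at this
    rw [← WithTop.coe_add]
    refine le_trans this ?_
    exact_mod_cast le_of_eq (by omega : m + k = nA + nB)
  refine ⟨le_antisymm step2 hLB, ?_⟩
  intro vs hvs
  refine hvs.2 ?_
  rintro x ⟨i, rfl⟩
  calc min va vb ≤ min (w (a i) + (i : WithTop ℤ)) (w (b i) + (i : WithTop ℤ)) :=
        le_min (min_le_left va vb |>.trans (hvaLB i)) (min_le_right va vb |>.trans (hvbLB i))
    _ = min (w (a i)) (w (b i)) + (i : WithTop ℤ) := min_add_add_right _ _ _
    _ ≤ w (a i + b i) + (i : WithTop ℤ) := add_le_add_left (hwadd _ _) _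
end
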